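/- Let g ∈ ℂ[x₀,…,x₅] be a homogeneous polynomial of degree 3. Suppose there exists a nonzero point p ∈ ℂ⁶ such that: all first partial derivatives of g vanish at p; the 6×6 Hessian matrix H = (∂²g/∂xᵢ∂xⱼ(p)) has rank exactly 3 (so p is a singular point of corank 2 and the kernel of H is a 3-dimensional subspace of ℂ⁶ containing p, whose projectivization is the null plane of the singularity); and g vanishes identically on ker(H) (i.e. the cubic fourfold contains the null plane of the singularity). Then there exists T ∈ GL(6,ℂ) such that every monomial occurring in g∘T has nonpositive weight with respect to the weight vector (4,1,1,-2,-2,-2); that is, g is of type S4 after a linear change of coordinates. -/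

import Mathlib

open MvPolynomial

section AuxHelpers

open Finsupp

variable {σ : Type*} [Fintype σ] [DecidableEq σ]

theorem coeff_pderiv'' (j : σ) (d : σ →₀ ℕ) (q : MvPolynomial σ ℂ) :
    coeff d (pderiv j q) = ((d j : ℂ) + 1) * coeff (d + Finsupp.single j 1) q := by
  induction q using MvPolynomial.induction_on' with
  | monomial s a =>
    rw [pderiv_monomial]
    by_cases h : s = d + Finsupp.single j 1
    · subst h
      have h1 : d + Finsupp.single j 1 - Finsupp.single j 1 = d := by
        ext i
        rcases eq_or_ne i j with rfl | hij
        · simp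
        · simp [Finsupp.single_apply, Ne.symm hij]
      have h2 : (d + Finsupp.single j 1 : σ →₀ ℕ) j = d j + 1 := by simp
      rw [coeff_monomial, coeff_monomial, h1, h2, if_pos rfl, if_pos rfl]
      push_cast; ring
    · rw [coeff_monomial, coeff_monomial, if_neg h]
      by_cases h2 : s - Finsupp.single j 1 = d
      · have hsj : s j = 0 := by
          by_contra hsj
          apply h
          have h3 : s j - 1 = d j := by
            have := DFunLike.congr_fun h2 j
            simpa using this
          ext i
          rcases eq_or_ne i j with rfl | hij
          · simp only [Finsupp.coe_add, Pi.add_apply, Finsupp.single_eq_same]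
            omega
          · have := DFunLike.congr_fun h2 i
            simp only [Finsupp.coe_tsub, Pi.sub_apply,
              Finsupp.single_eq_of_ne' (Ne.symm hij)] at this ⊢
            simp only [Finsupp.coe_add, Pi.add_apply,
              Finsupp.single_eq_of_ne' (Ne.symm hij)]
            omega
        rw [if_pos h2, hsj]; simp
      · rw [if_neg h2, mul_zero]
  | add p q hp hq => simp [hp, hq, mul_add]

theorem isHomogeneous_pderiv'' {q : MvPolynomial σ ℂ} {n : ℕ} (hq : q.IsHomogeneous n) (j : σ) :
    (pderiv j q).IsHomogeneous (n - 1) := by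
  intro d hd
  rw [coeff_pderiv''] at hd
  have h2 : coeff (d + Finsupp.single j 1) q ≠ 0 := by
    intro h; rw [h, mul_zero] at hd; exact hd rfl
  have h3 := hq h2
  rw [Finsupp.weight_apply, Finsupp.sum_fintype _ _ (by simp)] at h3 ⊢
  simp only [Finsupp.coe_add, Pi.add_apply, Finsupp.single_apply, Pi.one_apply, smul_eq_mul,
    mul_one] at h3 ⊢
  rw [Finset.sum_add_distrib] at h3
  simp only [Finset.sum_ite_eq, Finset.mem_univ, if_true] at h3
  omega

theorem pderiv_comm'' (i j : σ) (q : MvPolynomial σ ℂ) :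
    pderiv i (pderiv j q) = pderiv j (pderiv i q) := by
  apply MvPolynomial.ext
  intro d
  rw [coeff_pderiv'', coeff_pderiv'', coeff_pderiv'', coeff_pderiv'']
  have h : d + Finsupp.single i 1 + Finsupp.single j 1
      = d + Finsupp.single j 1 + Finsupp.single i 1 := by
    rw [add_assoc, add_assoc, add_comm (Finsupp.single i 1)]
  rw [h]
  rcases eq_or_ne i j with rfl | hij
  · ring
  · have h1 : (d + Finsupp.single i 1 : σ →₀ ℕ) j = d j := by
      simp [Finsupp.single_eq_of_ne' hij]
    have h2 : (d + Finsupp.single j 1 : σ →₀ ℕ) i = d i := by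
      simp [Finsupp.single_eq_of_ne' (Ne.symm hij)]
    rw [h1, h2]; ring

theorem euler'' {q : MvPolynomial σ ℂ} {n : ℕ} (hq : q.IsHomogeneous n) :
    ∑ j : σ, X j * pderiv j q = (n : ℂ) • q := by
  apply MvPolynomial.ext
  intro d
  rw [coeff_sum, coeff_smul]
  have key : ∀ j : σ, coeff d (X j * pderiv j q) = (d j : ℂ) * coeff d q := by
    intro j
    rw [mul_comm, coeff_mul_X']
    split_ifs with h
    · rw [coeff_pderiv'']
      have h1 : (d - Finsupp.single j 1 : σ →₀ ℕ) j = d j - 1 := by simp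
      have h2 : d - Finsupp.single j 1 + Finsupp.single j 1 = d := by
        ext k
        rcases eq_or_ne k j with rfl | hkj
        · have : 1 ≤ d k := by rwa [Finsupp.mem_support_iff, ← Nat.one_le_iff_ne_zero] at h
          simp only [Finsupp.coe_add, Pi.add_apply, Finsupp.coe_tsub, Pi.sub_apply,
            Finsupp.single_eq_same]
          omega
        · simp [Finsupp.single_eq_of_ne' (Ne.symm hkj)]
      rw [h1, h2]
      have : 1 ≤ d j := by rwa [Finsupp.mem_support_iff, ← Nat.one_le_iff_ne_zero] at h
      congr 1
      push_cast [this]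
      ring
    · rw [Finsupp.notMem_support_iff] at h
      rw [h]; simp
  rw [Finset.sum_congr rfl fun j _ => key j, ← Finset.sum_mul, smul_eq_mul]
  rcases eq_or_ne (coeff d q) 0 with h | h
  · rw [h, mul_zero, mul_zero]
  · congr 1
    have h3 := hq h
    rw [Finsupp.weight_apply, Finsupp.sum_fintype _ _ (by simp)] at h3
    simp only [Pi.one_apply, smul_eq_mul, mul_one] at h3
    rw [← h3]
    push_cast
    rfl

theorem eval_aeval'' (f : σ → MvPolynomial σ ℂ) (v : σ → ℂ) (q : MvPolynomial σ ℂ) :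
    eval v (aeval f q) = eval (fun i => eval v (f i)) q := by
  induction q using MvPolynomial.induction_on with
  | C a => simp
  | add p r hp hr => rw [map_add, map_add, eval_add, hp, hr]
  | mul_X p i hp => rw [map_mul, aeval_X, eval_mul, eval_mul, hp, eval_X]

theorem pderiv_aeval_linear'' (A : Matrix σ σ ℂ) (q : MvPolynomial σ ℂ) (j : σ) :
    pderiv j (aeval (fun i => ∑ k, A i k • X k) q)
      = ∑ i, C (A i j) * aeval (fun i => ∑ k, A i k • X k) (pderiv i q) := by
  set f : σ → MvPolynomial σ ℂ := fun i => ∑ k, A i k • X k with hf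
  have hderiv : ∀ i0, pderiv j (f i0) = C (A i0 j) := by
    intro i0
    rw [hf]
    simp only [map_sum, Derivation.map_smul, pderiv_X]
    rw [Finset.sum_eq_single j]
    · rw [Pi.single_eq_same, Algebra.smul_def, algebraMap_eq, mul_one]
    · intro k _ hk
      rw [Pi.single_eq_of_ne hk, smul_zero]
    · simp
  induction q using MvPolynomial.induction_on with
  | C a => simp
  | add p r hp hr =>
    simp only [map_add, hp, hr, mul_add, ← Finset.sum_add_distrib]
  | mul_X p i0 hp =>
    simp only [map_mul, aeval_X]
    rw [pderiv_mul, hp, hderiv]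
    have key : ∀ i : σ, C (A i j) * aeval f (pderiv i (p * X i0))
        = C (A i j) * aeval f (pderiv i p) * f i0
          + (if i = i0 then aeval f p * C (A i0 j) else 0) := by
      intro i
      rw [pderiv_mul, map_add, map_mul, map_mul, aeval_X, mul_add]
      congr 1
      · ring
      · rw [pderiv_X]
        rcases eq_or_ne i i0 with rfl | h
        · rw [Pi.single_eq_same, if_pos rfl, map_one, mul_one]; ring
        · rw [Pi.single_eq_of_ne (Ne.symm h), if_neg h, map_zero, mul_zero, mul_zero]
    rw [Finset.sum_congr rfl fun i _ => key i, Finset.sum_add_distrib,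
      Finset.sum_ite_eq' Finset.univ i0, if_pos (Finset.mem_univ i0), ← Finset.sum_mul]

theorem eval_single_of_homog'' {q : MvPolynomial σ ℂ} {k : ℕ} (hq : q.IsHomogeneous k)
    (i0 : σ) :
    eval (Pi.single i0 (1 : ℂ)) q = coeff (Finsupp.single i0 k) q := by
  rw [eval_eq']
  rw [Finset.sum_eq_single (Finsupp.single i0 k)]
  · rw [Finset.prod_eq_one, mul_one]
    intro i _
    rcases eq_or_ne i i0 with rfl | h
    · simp
    · rw [Pi.single_eq_of_ne h, Finsupp.single_eq_of_ne' (Ne.symm h), pow_zero]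
  · intro b hb hbne
    by_cases hsupp : ∀ i, i ≠ i0 → b i = 0
    · exfalso
      apply hbne
      have hb' : coeff b q ≠ 0 := MvPolynomial.mem_support_iff.mp hb
      have hw := hq hb'
      rw [Finsupp.weight_apply, Finsupp.sum_fintype _ _ (by simp)] at hw
      simp only [Pi.one_apply, smul_eq_mul, mul_one] at hw
      have hsum : ∑ i, b i = b i0 := by
        rw [Finset.sum_eq_single i0]
        · intro i _ hi; exact hsupp i hi
        · simp
      ext i
      rcases eq_or_ne i i0 with rfl | h
      · rw [Finsupp.single_eq_same, ← hw, hsum]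
      · rw [Finsupp.single_eq_of_ne' (Ne.symm h), hsupp i h]
    · push_neg at hsupp
      obtain ⟨i, hi, hbi⟩ := hsupp
      have hz : ((Pi.single i0 (1 : ℂ) : σ → ℂ) i) ^ b i = (0 : ℂ) := by
        rw [Pi.single_eq_of_ne hi, zero_pow hbi]
      rw [Finset.prod_eq_zero (Finset.mem_univ i) hz, mul_zero]
  · intro h
    rw [MvPolynomial.notMem_support_iff.mp h, zero_mul]

theorem coeff_aeval_mask'' (S : Finset σ) (q : MvPolynomial σ ℂ) (d : σ →₀ ℕ)
    (hd : ∀ i, d i ≠ 0 → i ∈ S) :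
    coeff d (aeval (fun i => if i ∈ S then X i else (0 : MvPolynomial σ ℂ)) q) = coeff d q := by
  induction q using MvPolynomial.induction_on' with
  | monomial s a =>
    rw [aeval_monomial]
    by_cases hs : ∀ i, s i ≠ 0 → i ∈ S
    · have : (s.prod fun i k => (if i ∈ S then X i else (0 : MvPolynomial σ ℂ)) ^ k)
          = s.prod fun i k => (X i) ^ k := by
        apply Finsupp.prod_congr
        intro i hi
        rw [if_pos (hs i (Finsupp.mem_support_iff.mp hi))]
      rw [this, algebraMap_eq, ← monomial_eq]
    · push_neg at hs
      obtain ⟨i, hi, hiS⟩ := hs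
      have : (s.prod fun i k => (if i ∈ S then X i else (0 : MvPolynomial σ ℂ)) ^ k) = 0 := by
        apply Finset.prod_eq_zero (Finsupp.mem_support_iff.mpr hi)
        simp only [if_neg hiS]
        exact zero_pow hi
      rw [this, mul_zero, coeff_zero, coeff_monomial]
      rw [if_neg]
      intro h
      exact hiS (hd i (by rw [← h]; exact hi))
  | add p r hp hr => rw [map_add, coeff_add, coeff_add, hp, hr]

end AuxHelpers

theorem exists_basis_head3'' {V : Type*} [AddCommGroup V] [Module ℂ V] [FiniteDimensional ℂ V]
    (hn : Module.finrank ℂ V = 3) (x : V) (hx : x ≠ 0) :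
    ∃ b : Module.Basis (Fin 3) ℂ V, b 0 = x := by
  have hli : LinearIndepOn ℂ id ({x} : Set V) := (linearIndepOn_singleton_iff ℂ).mpr hx
  let b0 := Module.Basis.extend hli
  haveI : Fintype (hli.extend (Set.subset_univ ({x} : Set V))) :=
    FiniteDimensional.fintypeBasisIndex b0
  have hcard : Fintype.card (hli.extend (Set.subset_univ ({x} : Set V))) = 3 := by
    rw [← Module.finrank_eq_card_basis b0, hn]
  have hxmem : x ∈ hli.extend (Set.subset_univ ({x} : Set V)) :=
    hli.subset_extend _ rfl
  let e : (hli.extend (Set.subset_univ ({x} : Set V))) ≃ Fin 3 :=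
    Fintype.equivFinOfCardEq hcard
  let e' := e.trans (Equiv.swap (e ⟨x, hxmem⟩) 0)
  refine ⟨b0.reindex e', ?_⟩
  rw [Module.Basis.reindex_apply]
  have : e'.symm 0 = ⟨x, hxmem⟩ := by
    simp only [e', Equiv.symm_trans_apply, Equiv.symm_swap, Equiv.swap_apply_right,
      Equiv.symm_apply_apply]
  rw [this, Module.Basis.extend_apply_self]

theorem exists_good_basis'' (K : Submodule ℂ (Fin 6 → ℂ)) (hK : Module.finrank ℂ K = 3)
    (p : Fin 6 → ℂ) (hpK : p ∈ K) (hp : p ≠ 0) :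
    ∃ b : Module.Basis (Fin 6) ℂ (Fin 6 → ℂ), b 0 = p ∧ ∀ i : Fin 6, i.val < 3 → (b i : Fin 6 → ℂ) ∈ K := by
  obtain ⟨K', hcompl⟩ := Submodule.exists_isCompl K
  have h6 : Module.finrank ℂ (Fin 6 → ℂ) = 6 := by simp
  have hK' : Module.finrank ℂ K' = 3 := by
    have := Submodule.finrank_add_eq_of_isCompl hcompl
    omega
  have hpx : (⟨p, hpK⟩ : K) ≠ 0 := by
    intro h
    exact hp (congrArg Subtype.val h)
  obtain ⟨bK, hbK0⟩ := exists_basis_head3'' hK ⟨p, hpK⟩ hpx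
  let bK' : Module.Basis (Fin 3) ℂ K' := (Module.finBasis ℂ K').reindex (finCongr hK')
  let bb := (bK.prod bK').map (Submodule.prodEquivOfIsCompl K K' hcompl)
  let ee : Fin 3 ⊕ Fin 3 ≃ Fin 6 := finSumFinEquiv
  let b := bb.reindex ee
  have claim : ∀ i : Fin 3, b (ee (Sum.inl i)) = (bK i : Fin 6 → ℂ) := by
    intro i
    rw [Module.Basis.reindex_apply, Equiv.symm_apply_apply]
    show (Submodule.prodEquivOfIsCompl K K' hcompl) ((bK.prod bK') (Sum.inl i)) = _
    have h1 : (bK.prod bK') (Sum.inl i) = (bK i, 0) := by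
      ext
      · rw [Module.Basis.prod_apply_inl_fst]
      · rw [Module.Basis.prod_apply_inl_snd]
    rw [h1, Submodule.coe_prodEquivOfIsCompl']
    simp
  refine ⟨b, ?_, ?_⟩
  · have h0 : (0 : Fin 6) = ee (Sum.inl (0 : Fin 3)) := rfl
    rw [h0, claim, hbK0]
  · intro i hi
    have h0 : i = ee (Sum.inl (⟨i.val, hi⟩ : Fin 3)) := by
      apply Fin.ext
      show i.val = ((finSumFinEquiv (Sum.inl (⟨i.val, hi⟩ : Fin 3))) : Fin (3 + 3)).val
      rw [finSumFinEquiv_apply_left]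
      rfl
    rw [h0, claim]
    exact (bK _).2

/-- The weight of a monomial exponent `d` with respect to an integer weight vector `a`. -/
def monomialWeight (a : Fin 6 → ℤ) (d : Fin 6 →₀ ℕ) : ℤ :=
  ∑ j, (d j : ℤ) * a j

/-- The polynomial obtained from `g` by the invertible linear substitution of variables
`xᵢ ↦ ∑ⱼ Tᵢⱼ xⱼ` given by `T ∈ GL(6, ℂ)`. -/
noncomputable def changeCoords (T : Matrix.GeneralLinearGroup (Fin 6) ℂ)
    (g : MvPolynomial (Fin 6) ℂ) : MvPolynomial (Fin 6) ℂ :=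
  aeval (fun i => ∑ j, (T : Matrix (Fin 6) (Fin 6) ℂ) i j • X j) g

/-- The 6×6 Hessian matrix of second partial derivatives of `g` evaluated at `p`. -/
noncomputable def hessianAt (g : MvPolynomial (Fin 6) ℂ) (p : Fin 6 → ℂ) :
    Matrix (Fin 6) (Fin 6) ℂ :=
  Matrix.of fun i j => eval p (pderiv i (pderiv j g))

set_option maxHeartbeats 2000000 in
/-- If a homogeneous cubic `g` has a corank-2 singular point `p` (all first partials of `g`
vanish at `p ≠ 0` and the Hessian at `p` has rank exactly 3) and `g` vanishes identically
on the kernel of the Hessian (the affine cone over the null plane of the singularity),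
then `g` is of type S4 after a linear change of coordinates: every monomial of the
transformed polynomial has nonpositive weight with respect to `(4,1,1,-2,-2,-2)`. -/
theorem corank_two_with_null_plane_is_typeS4 (g : MvPolynomial (Fin 6) ℂ)
    (hg : g.IsHomogeneous 3) (p : Fin 6 → ℂ) (hp : p ≠ 0)
    (hsing : ∀ i : Fin 6, eval p (pderiv i g) = 0)
    (hrank : (hessianAt g p).rank = 3)
    (hnull : ∀ v : Fin 6 → ℂ, (hessianAt g p).mulVec v = 0 → eval v g = 0) :
    ∃ T : Matrix.GeneralLinearGroup (Fin 6) ℂ,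
      ∀ d ∈ (changeCoords T g).support, monomialWeight ![4, 1, 1, -2, -2, -2] d ≤ 0 := by
  classical
  set H : Matrix (Fin 6) (Fin 6) ℂ := hessianAt g p with hHdef
  set K : Submodule ℂ (Fin 6 → ℂ) := LinearMap.ker H.mulVecLin with hKdef
  -- dimension of the kernel
  have hdim : Module.finrank ℂ K = 3 := by
    rw [hKdef]
    have h1 := LinearMap.finrank_range_add_finrank_ker H.mulVecLin
    have h2 : Module.finrank ℂ (Fin 6 → ℂ) = 6 := by simp
    have h3 : Module.finrank ℂ (LinearMap.range H.mulVecLin) = 3 := hrank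
    rw [h2, h3] at h1
    omega
  -- p lies in the kernel, by Euler's identity applied to the partial derivatives
  have hpK : p ∈ K := by
    rw [hKdef, LinearMap.mem_ker]
    have : ∀ i, H.mulVecLin p i = 0 := by
      intro i
      have heuler := congrArg (eval p) (euler'' ((by norm_num : (3:ℕ) - 1 = 2) ▸
        isHomogeneous_pderiv'' hg i))
      rw [map_sum, smul_eq_C_mul, eval_mul, eval_C, hsing i, mul_zero] at heuler
      have hswap : ∀ j : Fin 6, eval p (X j * pderiv j (pderiv i g))
          = p j * eval p (pderiv i (pderiv j g)) := by
        intro j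
        rw [eval_mul, eval_X, pderiv_comm'']
      rw [Finset.sum_congr rfl fun j _ => hswap j] at heuler
      rw [Matrix.mulVecLin_apply]
      show ∑ j, H i j * p j = 0
      rw [← heuler]
      apply Finset.sum_congr rfl
      intro j _
      rw [mul_comm]
      rfl
    funext i
    exact this i
  obtain ⟨b, hb0, hbK⟩ := exists_good_basis'' K hdim p hpK hp
  -- the coordinate change matrix: columns are the basis vectors
  set T : Matrix (Fin 6) (Fin 6) ℂ := (Pi.basisFun ℂ (Fin 6)).toMatrix ⇑b with hTdef
  haveI hTinv : Invertible T := (Pi.basisFun ℂ (Fin 6)).invertibleToMatrix b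
  refine ⟨unitOfInvertible T, ?_⟩
  have hTcoe : ((unitOfInvertible T : Matrix.GeneralLinearGroup (Fin 6) ℂ) :
      Matrix (Fin 6) (Fin 6) ℂ) = T := rfl
  set G : MvPolynomial (Fin 6) ℂ := changeCoords (unitOfInvertible T) g with hGdef
  have hGaeval : G = aeval (fun i => ∑ j, T i j • X j) g := by
    rw [hGdef, changeCoords, hTcoe]
  have hTentry : ∀ i j, T i j = b j i := by
    intro i j
    rw [hTdef, Module.Basis.toMatrix_apply, Pi.basisFun_repr]
  have hTmul : ∀ v : Fin 6 → ℂ, T.mulVec v = ∑ j, v j • b j := by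
    intro v
    funext i
    rw [Matrix.mulVec, dotProduct]
    rw [Finset.sum_apply]
    apply Finset.sum_congr rfl
    intro j _
    rw [hTentry i j, Pi.smul_apply, smul_eq_mul, mul_comm]
  have hTe0 : T.mulVec (Pi.single 0 1) = p := by
    rw [hTmul]
    rw [Finset.sum_eq_single 0]
    · rw [Pi.single_eq_same, one_smul, hb0]
    · intro j _ hj
      rw [Pi.single_eq_of_ne hj, zero_smul]
    · simp
  -- G is homogeneous of degree 3
  have hGhom : G.IsHomogeneous 3 := by
    rw [hGaeval]
    have := hg.aeval (S := ℂ) ((fun i => ∑ j, T i j • X j) : Fin 6 → MvPolynomial (Fin 6) ℂ) (n := 1) ?_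
    · simpa using this
    · intro i
      apply MvPolynomial.IsHomogeneous.sum
      intro j _
      rw [smul_eq_C_mul]
      exact isHomogeneous_C_mul_X _ _
  -- evaluation of G
  have hGeval : ∀ v : Fin 6 → ℂ, eval v G = eval (T.mulVec v) g := by
    intro v
    have hfn : (fun i => eval v (∑ j, T i j • X j)) = T.mulVec v := by
      funext i
      rw [map_sum, Matrix.mulVec, dotProduct]
      apply Finset.sum_congr rfl
      intro j _
      rw [smul_eq_C_mul, eval_mul, eval_C, eval_X]
    rw [hGaeval, eval_aeval'', hfn]
  -- general evaluation lemma for the substitution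
  have hev : ∀ (q : MvPolynomial (Fin 6) ℂ) (v : Fin 6 → ℂ),
      eval v (aeval (fun i => ∑ k, T i k • X k) q) = eval (T.mulVec v) q := by
    intro q v
    have hfn : (fun i => eval v (∑ k, T i k • X k)) = T.mulVec v := by
      funext i
      rw [map_sum, Matrix.mulVec, dotProduct]
      apply Finset.sum_congr rfl
      intro j _
      rw [smul_eq_C_mul, eval_mul, eval_C, eval_X]
    rw [eval_aeval'', hfn]
  -- Fact 1: coefficients of monomials supported on the first three variables vanish
  have hF1 : ∀ d : Fin 6 →₀ ℕ, (∀ i : Fin 6, 3 ≤ i.val → d i = 0) → coeff d G = 0 := by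
    intro d hd
    set S : Finset (Fin 6) := Finset.filter (fun i => i.val < 3) Finset.univ with hSdef
    have hmask : aeval (fun i => if i ∈ S then X i else (0 : MvPolynomial (Fin 6) ℂ)) G = 0 := by
      apply MvPolynomial.funext (q := 0)
      intro x
      rw [map_zero, eval_aeval'']
      have hw : (fun i => eval x (if i ∈ S then X i else (0 : MvPolynomial (Fin 6) ℂ)))
          = (fun i => if i ∈ S then x i else 0) := by
        funext i
        split_ifs <;> simp
      rw [hw, hGeval]
      apply hnull
      have hmem : T.mulVec (fun i => if i ∈ S then x i else 0) ∈ K := by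
        rw [hTmul]
        apply Submodule.sum_mem
        intro j _
        by_cases hj : j ∈ S
        · apply Submodule.smul_mem
          apply hbK
          rw [hSdef] at hj
          simpa using hj
        · rw [if_neg hj, zero_smul]
          exact Submodule.zero_mem K
      rw [hKdef, LinearMap.mem_ker] at hmem
      rw [← Matrix.mulVecLin_apply]
      exact hmem
    have hsub : ∀ i, d i ≠ 0 → i ∈ S := by
      intro i hi
      rw [hSdef]
      simp only [Finset.mem_filter, Finset.mem_univ, true_and]
      by_contra hlt
      push_neg at hlt
      exact hi (hd i hlt)
    rw [← coeff_aeval_mask'' S G d hsub, hmask, coeff_zero]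
  -- gradient of G vanishes at the first standard basis vector
  have hgrad : ∀ j : Fin 6, eval (Pi.single 0 (1 : ℂ)) (pderiv j G) = 0 := by
    intro j
    rw [hGaeval, pderiv_aeval_linear'', map_sum]
    apply Finset.sum_eq_zero
    intro i _
    rw [eval_mul, eval_C, hev, hTe0, hsing i, mul_zero]
  -- Fact 2
  have hF2 : ∀ j : Fin 6, j ≠ 0 → coeff (Finsupp.single 0 2 + Finsupp.single j 1) G = 0 := by
    intro j hj
    have h2 : (pderiv j G).IsHomogeneous 2 := by
      have := isHomogeneous_pderiv'' hGhom j
      norm_num at this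
      exact this
    have h3 := eval_single_of_homog'' h2 0
    rw [hgrad j, coeff_pderiv''] at h3
    have h4 : (Finsupp.single (0 : Fin 6) 2) j = 0 := Finsupp.single_eq_of_ne' (Ne.symm hj)
    rw [h4] at h3
    norm_num at h3
    exact h3.symm
  -- the Hessian of G at e0 vanishes in kernel directions
  have hhess : ∀ i j : Fin 6, i.val < 3 →
      eval (Pi.single 0 (1 : ℂ)) (pderiv j (pderiv i G)) = 0 := by
    intro i j hi
    have hbiK : b i ∈ K := hbK i hi
    rw [hKdef, LinearMap.mem_ker] at hbiK
    have hHb : H.mulVec (b i) = 0 := by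
      rw [← Matrix.mulVecLin_apply]
      exact hbiK
    have step1 : ∀ i' : Fin 6,
        eval (Pi.single 0 (1 : ℂ)) (pderiv j (C (T i' i)
          * aeval (fun i => ∑ k, T i k • X k) (pderiv i' g)))
        = T i' i * ∑ k, T k j * H k i' := by
      intro i'
      rw [pderiv_C_mul, pderiv_aeval_linear'', eval_mul, eval_C, map_sum]
      congr 1
      apply Finset.sum_congr rfl
      intro k _
      rw [eval_mul, eval_C, hev, hTe0]
      rfl
    rw [hGaeval, pderiv_aeval_linear'', map_sum, map_sum,
      Finset.sum_congr rfl fun i' _ => step1 i']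
    have expand : ∀ i' : Fin 6, T i' i * ∑ k, T k j * H k i'
        = ∑ k, T k j * (H k i' * T i' i) := by
      intro i'
      rw [Finset.mul_sum]
      apply Finset.sum_congr rfl
      intro k _
      ring
    rw [Finset.sum_congr rfl fun i' _ => expand i', Finset.sum_comm]
    apply Finset.sum_eq_zero
    intro k _
    rw [← Finset.mul_sum]
    have hk : ∑ i', H k i' * T i' i = 0 := by
      have hc := congrFun hHb k
      rw [Matrix.mulVec, dotProduct] at hc
      rw [Pi.zero_apply] at hc
      rw [← hc]
      apply Finset.sum_congr rfl
      intro i' _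
      rw [hTentry i' i]
    rw [hk, mul_zero]
  -- Fact 3
  have hF3 : ∀ i j : Fin 6, i ≠ 0 → j ≠ 0 → j ≠ i → i.val < 3 →
      coeff (Finsupp.single 0 1 + Finsupp.single j 1 + Finsupp.single i 1) G = 0 := by
    intro i j hi0 hj0 hji hi3
    have h1 : (pderiv i G).IsHomogeneous 2 := by
      have := isHomogeneous_pderiv'' hGhom i
      norm_num at this
      exact this
    have h2 : (pderiv j (pderiv i G)).IsHomogeneous 1 := by
      have := isHomogeneous_pderiv'' h1 j
      norm_num at this
      exact this
    have h3 := eval_single_of_homog'' h2 0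
    rw [hhess i j hi3, coeff_pderiv'', coeff_pderiv''] at h3
    have e1 : (Finsupp.single (0 : Fin 6) 1) j = 0 := Finsupp.single_eq_of_ne' (Ne.symm hj0)
    have e2 : (Finsupp.single (0 : Fin 6) 1 + Finsupp.single j 1 : Fin 6 →₀ ℕ) i = 0 := by
      rw [Finsupp.add_apply, Finsupp.single_eq_of_ne' (Ne.symm hi0),
        Finsupp.single_eq_of_ne' hji]
      rfl
    rw [e1, e2] at h3
    norm_num at h3
    exact h3.symm
  -- endgame: any monomial in the support has nonpositive weight
  intro d hd
  by_contra hwneg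
  push_neg at hwneg
  have hdsum : d 0 + d 1 + d 2 + d 3 + d 4 + d 5 = 3 := by
    have hh := hGhom (MvPolynomial.mem_support_iff.mp hd)
    rw [Finsupp.weight_apply, Finsupp.sum_fintype _ _ (by simp)] at hh
    simp only [Pi.one_apply, smul_eq_mul, mul_one] at hh
    rw [Fin.sum_univ_six] at hh
    exact hh
  have hwexp : 0 < 4 * (d 0 : ℤ) + (d 1 : ℤ) + (d 2 : ℤ)
      - 2 * (d 3 : ℤ) - 2 * (d 4 : ℤ) - 2 * (d 5 : ℤ) := by
    rw [monomialWeight, Fin.sum_univ_six] at hwneg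
    have e0 : (![4, 1, 1, -2, -2, -2] : Fin 6 → ℤ) 0 = 4 := rfl
    have e1 : (![4, 1, 1, -2, -2, -2] : Fin 6 → ℤ) 1 = 1 := rfl
    have e2 : (![4, 1, 1, -2, -2, -2] : Fin 6 → ℤ) 2 = 1 := rfl
    have e3 : (![4, 1, 1, -2, -2, -2] : Fin 6 → ℤ) 3 = -2 := rfl
    have e4 : (![4, 1, 1, -2, -2, -2] : Fin 6 → ℤ) 4 = -2 := rfl
    have e5 : (![4, 1, 1, -2, -2, -2] : Fin 6 → ℤ) 5 = -2 := rfl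
    rw [e0, e1, e2, e3, e4, e5] at hwneg
    linarith
  have hcoeff : coeff d G = 0 := by
    by_cases hm : d 3 = 0 ∧ d 4 = 0 ∧ d 5 = 0
    · apply hF1
      intro i hi
      have hival : i = 3 ∨ i = 4 ∨ i = 5 := by
        have h6 : i.val < 6 := i.isLt
        have : i.val = 3 ∨ i.val = 4 ∨ i.val = 5 := by omega
        rcases this with h | h | h
        · exact Or.inl (Fin.ext (by simpa using h))
        · exact Or.inr (Or.inl (Fin.ext (by simpa using h)))
        · exact Or.inr (Or.inr (Fin.ext (by simpa using h)))
      rcases hival with h | h | h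
      · rw [h]; exact hm.1
      · rw [h]; exact hm.2.1
      · rw [h]; exact hm.2.2
    · have hm1 : d 3 + d 4 + d 5 = 1 := by omega
      have hd0 : d 0 = 1 ∨ d 0 = 2 := by omega
      rcases hd0 with h0 | h0
      · have hic : d 1 = 1 ∨ d 2 = 1 := by omega
        have hjc : d 3 = 1 ∨ d 4 = 1 ∨ d 5 = 1 := by omega
        rcases hic with h1 | h1 <;> rcases hjc with h2 | h2 | h2
        · have heq : d = Finsupp.single 0 1 + Finsupp.single 3 1 + Finsupp.single 1 1 := by
            ext k
            fin_cases k <;> simp [Finsupp.single_apply] <;> omega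
          rw [heq]
          exact hF3 1 3 (by decide) (by decide) (by decide) (by decide)
        · have heq : d = Finsupp.single 0 1 + Finsupp.single 4 1 + Finsupp.single 1 1 := by
            ext k
            fin_cases k <;> simp [Finsupp.single_apply] <;> omega
          rw [heq]
          exact hF3 1 4 (by decide) (by decide) (by decide) (by decide)
        · have heq : d = Finsupp.single 0 1 + Finsupp.single 5 1 + Finsupp.single 1 1 := by
            ext k
            fin_cases k <;> simp [Finsupp.single_apply] <;> omega
          rw [heq]
          exact hF3 1 5 (by decide) (by decide) (by decide) (by decide)
        · have heq : d = Finsupp.single 0 1 + Finsupp.single 3 1 + Finsupp.single 2 1 := by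
            ext k
            fin_cases k <;> simp [Finsupp.single_apply] <;> omega
          rw [heq]
          exact hF3 2 3 (by decide) (by decide) (by decide) (by decide)
        · have heq : d = Finsupp.single 0 1 + Finsupp.single 4 1 + Finsupp.single 2 1 := by
            ext k
            fin_cases k <;> simp [Finsupp.single_apply] <;> omega
          rw [heq]
          exact hF3 2 4 (by decide) (by decide) (by decide) (by decide)
        · have heq : d = Finsupp.single 0 1 + Finsupp.single 5 1 + Finsupp.single 2 1 := by
            ext k
            fin_cases k <;> simp [Finsupp.single_apply] <;> omega
          rw [heq]
          exact hF3 2 5 (by decide) (by decide) (by decide) (by decide)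
      · have hjc : d 3 = 1 ∨ d 4 = 1 ∨ d 5 = 1 := by omega
        rcases hjc with h2 | h2 | h2
        · have heq : d = Finsupp.single 0 2 + Finsupp.single 3 1 := by
            ext k
            fin_cases k <;> simp [Finsupp.single_apply] <;> omega
          rw [heq]
          exact hF2 3 (by decide)
        · have heq : d = Finsupp.single 0 2 + Finsupp.single 4 1 := by
            ext k
            fin_cases k <;> simp [Finsupp.single_apply] <;> omega
          rw [heq]
          exact hF2 4 (by decide)
        · have heq : d = Finsupp.single 0 2 + Finsupp.single 5 1 := by
            ext k
            fin_cases k <;> simp [Finsupp.single_apply] <;> omega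
          rw [heq]
          exact hF2 5 (by decide)
  exact (MvPolynomial.mem_support_iff.mp hd) hcoeff
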